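/- arXiv:1811.10518 — 2 statements merged into one kernel-verified Lean document; each statement's English description precedes it below -/
import Mathlib

section
/- Let M, N be subspaces of ℂ^n with orthogonal projections P_M, P_N, let θ₁ be the Dixmier angle between M and N and η₁ the Dixmier angle between M^⊥ and N^⊥. Then for every x ∈ ℂ^n: 2‖x‖² sin²(η₁/2) ≤ ‖P_M x‖² + ‖P_N x‖² ≤ 2‖x‖² cos²(θ₁/2). -/
/-! Write `a = P_M x`, `b = P_N x`, `c = cos θ₁`. Since `P_M` and `P_N` are orthogonal projections,
`‖a‖² + ‖b‖² = re ⟪a + b, x⟫ ≤ ‖a + b‖ ‖x‖`, and the Dixmier bound `|⟪a, b⟫| ≤ c ‖a‖ ‖b‖` gives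
`‖a + b‖² ≤ (1 + c)(‖a‖² + ‖b‖²)`; hence `‖a‖² + ‖b‖² ≤ (1 + c)‖x‖²`. The same bound for `Mᗮ`, `Nᗮ`,
together with `‖P_K x‖² + ‖P_Kᗮ x‖² = ‖x‖²`, is the lower estimate. -/

open scoped ComplexInnerProductSpace

/-- The orthogonal projection onto a subspace `K` of `ℂⁿ`, as an operator on `ℂⁿ`. -/
noncomputable def projCLM {n : ℕ} (K : Submodule ℂ (EuclideanSpace ℂ (Fin n))) :
    EuclideanSpace ℂ (Fin n) →L[ℂ] EuclideanSpace ℂ (Fin n) :=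
  K.subtypeL.comp K.orthogonalProjectionOnto

lemma projCLM_eq_starProjection {n : ℕ} (K : Submodule ℂ (EuclideanSpace ℂ (Fin n))) :
    projCLM K = K.starProjection :=
  rfl

open scoped InnerProductSpace

namespace Submodule

variable {𝕜 E : Type*} [RCLike 𝕜] [NormedAddCommGroup E] [InnerProductSpace 𝕜 E]

/-- `cos α₀(M, N)`; it is `sSup ∅ = 0` when `M` or `N` is trivial. -/
noncomputable def dixmierCos (M N : Submodule 𝕜 E) : ℝ :=
  sSup {r : ℝ | ∃ u ∈ M, ∃ v ∈ N, ‖u‖ = 1 ∧ ‖v‖ = 1 ∧ ‖⟪u, v⟫_𝕜‖ = r}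

variable (M N : Submodule 𝕜 E)

lemma dixmierCos_nonneg : 0 ≤ M.dixmierCos N :=
  Real.sSup_nonneg <| by
    rintro r ⟨u, -, v, -, -, -, rfl⟩
    exact norm_nonneg _

lemma norm_inner_le_dixmierCos_mul {u v : E} (hu : u ∈ M) (hv : v ∈ N) :
    ‖⟪u, v⟫_𝕜‖ ≤ M.dixmierCos N * (‖u‖ * ‖v‖) := by
  rcases eq_or_ne u 0 with rfl | hu0
  · simp
  rcases eq_or_ne v 0 with rfl | hv0
  · simp
  rw [← div_le_iff₀ (by positivity)]
  refine le_csSup ⟨1, ?_⟩ ⟨_, M.smul_mem _ hu, _, N.smul_mem _ hv,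
    norm_smul_inv_norm hu0, norm_smul_inv_norm hv0, ?_⟩
  · rintro r ⟨u, -, v, -, hu1, hv1, rfl⟩
    simpa [hu1, hv1] using norm_inner_le_norm (𝕜 := 𝕜) u v
  · simp only [inner_smul_left, inner_smul_right, norm_mul, RCLike.norm_conj, norm_inv,
      RCLike.norm_ofReal, abs_norm]
    field_simp

lemma norm_add_sq_le_one_add_dixmierCos_mul {a b : E} (ha : a ∈ M) (hb : b ∈ N) :
    ‖a + b‖ ^ 2 ≤ (1 + M.dixmierCos N) * (‖a‖ ^ 2 + ‖b‖ ^ 2) := by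
  have hab : RCLike.re ⟪a, b⟫_𝕜 ≤ M.dixmierCos N * (‖a‖ * ‖b‖) :=
    (RCLike.re_le_norm _).trans (M.norm_inner_le_dixmierCos_mul N ha hb)
  have hc := M.dixmierCos_nonneg N
  rw [@norm_add_sq 𝕜]
  nlinarith [mul_nonneg hc (sq_nonneg (‖a‖ - ‖b‖))]

lemma norm_starProjection_sq_add_le [M.HasOrthogonalProjection] [N.HasOrthogonalProjection]
    (x : E) :
    ‖M.starProjection x‖ ^ 2 + ‖N.starProjection x‖ ^ 2 ≤ (1 + M.dixmierCos N) * ‖x‖ ^ 2 := by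
  set S := ‖M.starProjection x‖ ^ 2 + ‖N.starProjection x‖ ^ 2
  have hS : S = RCLike.re ⟪M.starProjection x + N.starProjection x, x⟫_𝕜 := by
    simp only [inner_add_left, map_add, re_inner_starProjection_eq_normSq]
    rfl
  have hsum := M.norm_add_sq_le_one_add_dixmierCos_mul N
    (M.starProjection_apply_mem x) (N.starProjection_apply_mem x)
  have hS0 : 0 ≤ S := by positivity
  have hCS : S ^ 2 ≤ ‖M.starProjection x + N.starProjection x‖ ^ 2 * ‖x‖ ^ 2 := by
    rw [← mul_pow]
    exact pow_le_pow_left₀ hS0 (hS ▸ re_inner_le_norm _ _) 2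
  have hSS : S * S ≤ ((1 + M.dixmierCos N) * ‖x‖ ^ 2) * S := by
    nlinarith [mul_le_mul_of_nonneg_right hsum (sq_nonneg ‖x‖)]
  rcases hS0.eq_or_lt with hS0 | hS0
  · rw [← hS0]
    have := M.dixmierCos_nonneg N
    positivity
  · exact le_of_mul_le_mul_right hSS hS0

end Submodule

theorem sum_sq_norms_projections_bounds_general {n : ℕ}
    (M N : Submodule ℂ (EuclideanSpace ℂ (Fin n)))
    (θ₁ η₁ : ℝ)
    (hcosθ : Real.cos θ₁ = sSup {r : ℝ | ∃ u ∈ M, ∃ v ∈ N,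
      ‖u‖ = 1 ∧ ‖v‖ = 1 ∧ ‖⟪u, v⟫‖ = r})
    (hcosη : Real.cos η₁ = sSup {r : ℝ | ∃ u ∈ Mᗮ, ∃ v ∈ Nᗮ,
      ‖u‖ = 1 ∧ ‖v‖ = 1 ∧ ‖⟪u, v⟫‖ = r}) :
    ∀ x : EuclideanSpace ℂ (Fin n),
      2 * ‖x‖ ^ 2 * Real.sin (η₁ / 2) ^ 2 ≤ ‖projCLM M x‖ ^ 2 + ‖projCLM N x‖ ^ 2 ∧
      ‖projCLM M x‖ ^ 2 + ‖projCLM N x‖ ^ 2 ≤ 2 * ‖x‖ ^ 2 * Real.cos (θ₁ / 2) ^ 2 := by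
  intro x
  have hupper := M.norm_starProjection_sq_add_le N x
  have hlower := Mᗮ.norm_starProjection_sq_add_le Nᗮ x
  rw [show M.dixmierCos N = Real.cos θ₁ from hcosθ.symm] at hupper
  rw [show Mᗮ.dixmierCos Nᗮ = Real.cos η₁ from hcosη.symm] at hlower
  have hM := M.norm_sq_eq_add_norm_sq_starProjection x
  have hN := N.norm_sq_eq_add_norm_sq_starProjection x
  have hcos_half : Real.cos (θ₁ / 2) ^ 2 = (1 + Real.cos θ₁) / 2 := by
    rw [Real.cos_sq, mul_div_cancel₀ _ two_ne_zero]; ring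
  have hsin_half : Real.sin (η₁ / 2) ^ 2 = (1 - Real.cos η₁) / 2 := by
    rw [Real.sin_sq_eq_half_sub, mul_div_cancel₀ _ two_ne_zero]; ring
  rw [projCLM_eq_starProjection, projCLM_eq_starProjection, hcos_half, hsin_half]
  constructor <;> linarith

/-- If `θ₁` is the Dixmier angle between `M` and `N` and `η₁` that between
`Mᗮ` and `Nᗮ`, then for all `x ∈ ℂⁿ`:
`2‖x‖² sin²(η₁/2) ≤ ‖P_M x‖² + ‖P_N x‖² ≤ 2‖x‖² cos²(θ₁/2)`. -/
theorem sum_sq_norms_projections_bounds {n : ℕ}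
    (M N : Submodule ℂ (EuclideanSpace ℂ (Fin n)))
    (θ₁ η₁ : ℝ) (hθ₁ : θ₁ ∈ Set.Icc 0 (Real.pi / 2)) (hη₁ : η₁ ∈ Set.Icc 0 (Real.pi / 2))
    (hcosθ : Real.cos θ₁ = sSup {r : ℝ | ∃ u ∈ M, ∃ v ∈ N,
      ‖u‖ = 1 ∧ ‖v‖ = 1 ∧ ‖⟪u, v⟫‖ = r})
    (hcosη : Real.cos η₁ = sSup {r : ℝ | ∃ u ∈ Mᗮ, ∃ v ∈ Nᗮ,
      ‖u‖ = 1 ∧ ‖v‖ = 1 ∧ ‖⟪u, v⟫‖ = r}) :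
    ∀ x : EuclideanSpace ℂ (Fin n),
      2 * ‖x‖ ^ 2 * Real.sin (η₁ / 2) ^ 2 ≤ ‖projCLM M x‖ ^ 2 + ‖projCLM N x‖ ^ 2 ∧
      ‖projCLM M x‖ ^ 2 + ‖projCLM N x‖ ^ 2 ≤ 2 * ‖x‖ ^ 2 * Real.cos (θ₁ / 2) ^ 2 :=
  sum_sq_norms_projections_bounds_general M N θ₁ η₁ hcosθ hcosη
end

section
/- Let P, Q be orthogonal projections onto subspaces M, N of ℂ^n in generic position with principal vectors u_k, v_k satisfying P v_k = λ_k u_k, Q u_k = λ_k v_k where λ_k = cos θ_k ∈ (0,1), μ_k = sin θ_k. Then (P − Q)(u_k − ((1−μ_k)/λ_k) v_k) = μ_k (u_k − ((1−μ_k)/λ_k) v_k) and (P − Q)(u_k − ((1+μ_k)/λ_k) v_k) = −μ_k (u_k − ((1+μ_k)/λ_k) v_k); i.e., ±μ_k are eigenvalues of P − Q. -/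
/-!
On the plane spanned by `u` and `v`, `P - Q` sends `u - α v` to `(1 - αλ) u + (α - λ) v`.
This is `μ (u - α v)` exactly when `αλ = 1 - μ` and `α (1 + μ) = λ`; for `α = (1 - μ) / λ`
the second condition is `λ² + μ² = 1`. Since only `μ² + λ² = 1` enters, replacing `μ` by `-μ`
gives the eigenvector for `-μ`.
-/

open scoped ComplexInnerProductSpace

theorem Module.End.sub_apply_eq_smul_of_principal_pair {K V : Type*} [Field K] [AddCommGroup V]
    [Module K V] {P Q : Module.End K V} {u v : V} {c s : K}
    (hPu : P u = u) (hQv : Q v = v) (hPv : P v = c • u) (hQu : Q u = c • v)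
    (hc : c ≠ 0) (hsc : s ^ 2 + c ^ 2 = 1) :
    (P - Q) (u - ((1 - s) / c) • v) = s • (u - ((1 - s) / c) • v) := by
  simp only [LinearMap.sub_apply, map_sub, map_smul, hPu, hQv, hPv, hQu]
  match_scalars
  · field_simp
    ring
  · field_simp
    linear_combination -hsc

theorem projCLM_apply_of_mem {n : ℕ} {K : Submodule ℂ (EuclideanSpace ℂ (Fin n))}
    {x : EuclideanSpace ℂ (Fin n)} (hx : x ∈ K) : projCLM K x = x :=
  K.starProjection_eq_self_iff.2 hx

theorem eigen_diff_projections_general {n : ℕ}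
    (M N : Submodule ℂ (EuclideanSpace ℂ (Fin n)))
    (u v : EuclideanSpace ℂ (Fin n)) (θ : ℝ) (hθ : θ ∈ Set.Ioo 0 (Real.pi / 2))
    (hu : u ∈ M) (hv : v ∈ N)
    (hPv : projCLM M v = (Real.cos θ : ℂ) • u)
    (hQu : projCLM N u = (Real.cos θ : ℂ) • v) :
    (projCLM M - projCLM N)
        (u - (((1 - Real.sin θ) / Real.cos θ : ℝ) : ℂ) • v) =
      (Real.sin θ : ℂ) • (u - (((1 - Real.sin θ) / Real.cos θ : ℝ) : ℂ) • v) ∧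
    (projCLM M - projCLM N)
        (u - (((1 + Real.sin θ) / Real.cos θ : ℝ) : ℂ) • v) =
      -(Real.sin θ : ℂ) • (u - (((1 + Real.sin θ) / Real.cos θ : ℝ) : ℂ) • v) := by
  have hcos : Real.cos θ ≠ 0 :=
    (Real.cos_pos_of_mem_Ioo ⟨by linarith [Real.pi_pos, hθ.1], hθ.2⟩).ne'
  have eigen (s : ℝ) (hs : s ^ 2 + Real.cos θ ^ 2 = 1) :
      (projCLM M - projCLM N) (u - (((1 - s) / Real.cos θ : ℝ) : ℂ) • v) =
        (s : ℂ) • (u - (((1 - s) / Real.cos θ : ℝ) : ℂ) • v) := by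
    simp only [Complex.ofReal_div, Complex.ofReal_sub, Complex.ofReal_one]
    exact Module.End.sub_apply_eq_smul_of_principal_pair (P := (projCLM M).toLinearMap)
      (Q := (projCLM N).toLinearMap) (projCLM_apply_of_mem hu) (projCLM_apply_of_mem hv)
      hPv hQu (by exact_mod_cast hcos) (by exact_mod_cast hs)
  refine ⟨eigen _ (Real.sin_sq_add_cos_sq θ), ?_⟩
  simpa only [sub_neg_eq_add, Complex.ofReal_neg] using
    eigen (-Real.sin θ) (by rw [neg_sq]; exact Real.sin_sq_add_cos_sq θ)

/-- For orthogonal projections `P = P_M`, `Q = P_N` and principal vectors `u, v`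
with angle `θ ∈ (0, π/2)`, `λ = cos θ`, `μ = sin θ`, the vectors
`u - ((1∓μ)/λ) v` are eigenvectors of `P - Q` with eigenvalues `±μ`. -/
theorem eigen_diff_projections {n : ℕ}
    (M N : Submodule ℂ (EuclideanSpace ℂ (Fin n)))
    (hMN : M ⊓ N = ⊥) (hMN' : M ⊓ Nᗮ = ⊥) (hM'N : Mᗮ ⊓ N = ⊥) (hM'N' : Mᗮ ⊓ Nᗮ = ⊥)
    (u v : EuclideanSpace ℂ (Fin n)) (θ : ℝ) (hθ : θ ∈ Set.Ioo 0 (Real.pi / 2))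
    (hu : u ∈ M) (hv : v ∈ N) (hun : ‖u‖ = 1) (hvn : ‖v‖ = 1)
    (huv : ⟪u, v⟫ = (Real.cos θ : ℂ))
    (hPv : projCLM M v = (Real.cos θ : ℂ) • u)
    (hQu : projCLM N u = (Real.cos θ : ℂ) • v) :
    (projCLM M - projCLM N)
        (u - (((1 - Real.sin θ) / Real.cos θ : ℝ) : ℂ) • v) =
      (Real.sin θ : ℂ) • (u - (((1 - Real.sin θ) / Real.cos θ : ℝ) : ℂ) • v) ∧
    (projCLM M - projCLM N)
        (u - (((1 + Real.sin θ) / Real.cos θ : ℝ) : ℂ) • v) =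
      -(Real.sin θ : ℂ) • (u - (((1 + Real.sin θ) / Real.cos θ : ℝ) : ℂ) • v) :=
  eigen_diff_projections_general M N u v θ hθ hu hv hPv hQu
end
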